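/- Consider N harmonic oscillators ẍ_i = −ω_i² x_i + u_i with energies H_i = (ẋ_i² + ω_i² x_i²)/2. Under the control u_i = −γ ẋ_i (2H_i − H_{i−1} − H_{i+1}) (cyclic indices), the function Q = ∑_i (H_i − H_{i+1})² satisfies dQ/dt = −2γ ∑_i ẋ_i² (2H_i − H_{i−1} − H_{i+1})² ≤ 0 along solutions. -/

import Mathlib

open Filter

theorem stmt_11 (N : ℕ) [NeZero N] (ω : Fin N → ℝ) (hω : ∀ i, 0 < ω i)
    (γ : ℝ) (hγ : 0 < γ) (x : Fin N → ℝ → ℝ)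
    (hx : ∀ i, Differentiable ℝ (x i))
    (H : Fin N → ℝ → ℝ)
    (hH : ∀ i t, H i t = ((deriv (x i) t) ^ 2 + (ω i) ^ 2 * (x i t) ^ 2) / 2)
    (u : Fin N → ℝ → ℝ)
    (hu : ∀ i t, u i t = -γ * deriv (x i) t * (2 * H i t - H (i - 1) t - H (i + 1) t))
    (hacc : ∀ i t, HasDerivAt (deriv (x i)) (-(ω i) ^ 2 * x i t + u i t) t)
    (Q : ℝ → ℝ) (hQ : ∀ t, Q t = ∑ i, (H i t - H (i + 1) t) ^ 2) :
    ∀ t, HasDerivAt Q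
        (-2 * γ * ∑ i, (deriv (x i) t) ^ 2 * (2 * H i t - H (i - 1) t - H (i + 1) t) ^ 2) t ∧
      -2 * γ * ∑ i, (deriv (x i) t) ^ 2 * (2 * H i t - H (i - 1) t - H (i + 1) t) ^ 2 ≤ 0 := by
  intro t
  have hH' : ∀ i, HasDerivAt (H i) (deriv (x i) t * u i t) t := by
    intro i
    have hfe : H i = fun s => ((deriv (x i) s) ^ 2 + (ω i) ^ 2 * (x i s) ^ 2) / 2 :=
      funext fun s => hH i s
    rw [hfe]
    have h2 := (((hacc i t).fun_pow 2).fun_add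
      (((hx i t).hasDerivAt.fun_pow 2).const_mul ((ω i) ^ 2))).div_const 2
    refine h2.congr_deriv ?_
    push_cast
    ring
  have hQd : HasDerivAt Q
      (∑ i, 2 * (H i t - H (i + 1) t) *
        (deriv (x i) t * u i t - deriv (x (i + 1)) t * u (i + 1) t)) t := by
    have hfe : Q = fun s => ∑ i, (H i s - H (i + 1) s) ^ 2 := funext fun s => hQ s
    rw [hfe]
    apply HasDerivAt.fun_sum
    intro i _
    have h3 := ((hH' i).fun_sub (hH' (i + 1))).fun_pow 2
    refine h3.congr_deriv ?_
    push_cast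
    ring
  have key : (∑ i, 2 * (H i t - H (i + 1) t) *
        (deriv (x i) t * u i t - deriv (x (i + 1)) t * u (i + 1) t))
      = -2 * γ * ∑ i, (deriv (x i) t) ^ 2 * (2 * H i t - H (i - 1) t - H (i + 1) t) ^ 2 := by
    calc
      (∑ i, 2 * (H i t - H (i + 1) t) *
          (deriv (x i) t * u i t - deriv (x (i + 1)) t * u (i + 1) t))
        = (∑ i, 2 * (H i t - H (i + 1) t) * (deriv (x i) t * u i t)) -
            ∑ i, 2 * (H i t - H (i + 1) t) * (deriv (x (i + 1)) t * u (i + 1) t) := by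
          rw [← Finset.sum_sub_distrib]
          exact Finset.sum_congr rfl fun i _ => by ring
      _ = (∑ i, 2 * (H i t - H (i + 1) t) * (deriv (x i) t * u i t)) -
            ∑ i, 2 * (H (i - 1) t - H i t) * (deriv (x i) t * u i t) := by
          congr 1
          exact Fintype.sum_equiv (Equiv.addRight 1) _ _ (fun i => by
            simp [Equiv.addRight])
      _ = ∑ i, (2 * (H i t - H (i + 1) t) * (deriv (x i) t * u i t) -
            2 * (H (i - 1) t - H i t) * (deriv (x i) t * u i t)) :=
          (Finset.sum_sub_distrib _ _).symm
      _ = -2 * γ * ∑ i, (deriv (x i) t) ^ 2 * (2 * H i t - H (i - 1) t - H (i + 1) t) ^ 2 := by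
          rw [Finset.mul_sum]
          exact Finset.sum_congr rfl fun i _ => by rw [hu i t]; ring
  refine ⟨key ▸ hQd, ?_⟩
  have hsum : 0 ≤ ∑ i, (deriv (x i) t) ^ 2 * (2 * H i t - H (i - 1) t - H (i + 1) t) ^ 2 :=
    Finset.sum_nonneg fun i _ => mul_nonneg (sq_nonneg _) (sq_nonneg _)
  exact mul_nonpos_of_nonpos_of_nonneg (by linarith) hsum
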